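/- arXiv:2403.07712 — 4 statements merged into one kernel-verified Lean document; each statement's English description precedes it below -/
import Mathlib

section
/- Let ω : (0,1] → ℝ be nonnegative with 4π ∫₀¹ r⁴ ω(r) dr = 6 and 4π ∫₀¹ r⁶ ω(r) dr ≤ 4π ∫₀¹ r⁴ ω(r) dr. Define λ_δ(ξ) = (4π/δ²) ∫₀^{π/2} sin φ ∫₀¹ r² ω(r)(1 − cos(r cos(φ) δ|ξ|)) dr dφ for ξ ∈ ℝ³. Then for all ξ with 0 < δ|ξ| ≤ 1, λ_δ(ξ) ≥ |ξ|² − (1/20)|ξ|²(δ|ξ|)² ≥ (1/2)|ξ|². -/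
/-!
Since `1 - cos t ≥ t²/2 - t⁴/24`, the radial integral `∫₀¹ r² ω(r) (1 - cos (r t)) dr` is at least
`t²/2 · M₄ - t⁴/24 · M₆`, where `Mₙ = ∫₀¹ rⁿ ω(r) dr`. Taking `t = δ|ξ| cos φ` and integrating
against `sin φ` over `[0, π/2]` (where `∫ sin φ cosⁿ φ = 1/(n+1)`) gives
`(δ|ξ|)²/6 · M₄ - (δ|ξ|)⁴/120 · M₆`; multiplying by `4π/δ²` and using `4π M₄ = 6`, `4π M₆ ≤ 6`
yields `|ξ|² - |ξ|² (δ|ξ|)²/20`.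
-/

open Real MeasureTheory Set Filter Topology

lemma Real.cos_le_one_sub_sq_div_two_add_pow_four_div {x : ℝ} :
    cos x ≤ 1 - x ^ 2 / 2 + x ^ 4 / 24 := by
  wlog hx : 0 ≤ x generalizing x
  · simpa [even_two.neg_pow, (by decide : Even 4).neg_pow]
      using this (neg_nonneg.2 (not_le.1 hx).le)
  let f : ℝ → ℝ := fun u => 1 - u ^ 2 / 2 + u ^ 4 / 24 - cos u
  have hf : ∀ t, HasDerivAt f (sin t - (t - t ^ 3 / 6)) t := fun t =>
    ((((hasDerivAt_pow 2 t).div_const 2).const_sub 1).add ((hasDerivAt_pow 4 t).div_const 24)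
      |>.sub (hasDerivAt_cos t)).congr_deriv (by norm_num; ring)
  have hmono : MonotoneOn f (Ici 0) :=
    monotoneOn_of_deriv_nonneg (convex_Ici 0) (fun t _ => (hf t).continuousAt.continuousWithinAt)
      (fun t _ => (hf t).differentiableAt.differentiableWithinAt) fun t ht => by
        rw [(hf t).deriv, sub_nonneg]
        exact sin_ge_sub_cube (interior_subset ht)
  have := hmono self_mem_Ici hx hx
  simp only [f] at this
  norm_num at this
  linarith

lemma integral_sin_mul_cos_pow (n : ℕ) :
    ∫ φ in (0 : ℝ)..(π / 2), sin φ * cos φ ^ n = 1 / (n + 1) := by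
  simpa [integral_pow] using integral_sin_pow_odd_mul_cos_pow (a := 0) (b := π / 2) 0 n

lemma aestronglyMeasurable_of_integrableOn_pow_mul {ω : ℝ → ℝ} {s : Set ℝ} {n : ℕ}
    (hs : MeasurableSet s) (hs0 : s ⊆ Ioi 0) (h : IntegrableOn (fun r => r ^ n * ω r) s) :
    AEStronglyMeasurable ω (volume.restrict s) := by
  refine (h.aestronglyMeasurable.mul
    (continuous_pow n).measurable.inv.aestronglyMeasurable).congr ?_
  filter_upwards [ae_restrict_mem hs] with r hr
  have : r ^ n ≠ 0 := pow_ne_zero n (hs0 hr).ne'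
  simp only [Pi.mul_apply, Pi.inv_apply]
  field_simp

lemma intervalIntegrable_mul_of_abs_le_mul_pow {ω g : ℝ → ℝ} {C : ℝ} {n : ℕ}
    (hω : ∀ r ∈ Ioc (0 : ℝ) 1, 0 ≤ ω r)
    (hn : IntervalIntegrable (fun r => r ^ n * ω r) volume 0 1)
    (hg : Continuous g) (hgC : ∀ r ∈ Ioc (0 : ℝ) 1, |g r| ≤ C * r ^ n) :
    IntervalIntegrable (fun r => g r * ω r) volume 0 1 := by
  rw [intervalIntegrable_iff_integrableOn_Ioc_of_le zero_le_one] at hn ⊢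
  have hωm := aestronglyMeasurable_of_integrableOn_pow_mul measurableSet_Ioc (fun _ hr => hr.1) hn
  refine (hn.const_mul C).mono' (hg.aestronglyMeasurable.mul hωm) ?_
  filter_upwards [ae_restrict_mem measurableSet_Ioc] with r hr
  rw [norm_mul, Real.norm_eq_abs, Real.norm_eq_abs, abs_of_nonneg (hω r hr), ← mul_assoc]
  exact mul_le_mul_of_nonneg_right (hgC r hr) (hω r hr)

lemma abs_sq_mul_one_sub_cos_le (r t : ℝ) : |r ^ 2 * (1 - cos (r * t))| ≤ t ^ 2 / 2 * r ^ 4 := by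
  have h := one_sub_sq_div_two_le_cos (x := r * t)
  rw [abs_of_nonneg (mul_nonneg (sq_nonneg r) (sub_nonneg.2 (cos_le_one _)))]
  nlinarith [sq_nonneg r]

noncomputable def radialMoment (ω : ℝ → ℝ) (n : ℕ) : ℝ :=
  ∫ r in (0 : ℝ)..1, r ^ n * ω r

/-- `λ_δ(ξ) = (4π/δ²) ∫₀^{π/2} sin φ · radialSymbol ω (δ|ξ| cos φ) dφ`. -/
noncomputable def radialSymbol (ω : ℝ → ℝ) (t : ℝ) : ℝ :=
  ∫ r in (0 : ℝ)..1, r ^ 2 * ω r * (1 - cos (r * t))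

section radialSymbol

variable {ω : ℝ → ℝ} (hω : ∀ r ∈ Ioc (0 : ℝ) 1, 0 ≤ ω r)
  (h4 : IntervalIntegrable (fun r => r ^ 4 * ω r) volume 0 1)
include hω h4

lemma intervalIntegrable_radialSymbol_integrand (t : ℝ) :
    IntervalIntegrable (fun r => r ^ 2 * ω r * (1 - cos (r * t))) volume 0 1 := by
  have := intervalIntegrable_mul_of_abs_le_mul_pow hω h4 (by fun_prop)
    fun r _ => abs_sq_mul_one_sub_cos_le r t
  convert this using 2 with r
  ring

lemma moments_le_radialSymbol (t : ℝ) :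
    t ^ 2 / 2 * radialMoment ω 4 - t ^ 4 / 24 * radialMoment ω 6 ≤ radialSymbol ω t := by
  have h6 : IntervalIntegrable (fun r => r ^ 6 * ω r) volume 0 1 :=
    intervalIntegrable_mul_of_abs_le_mul_pow (C := 1) hω h4 (by fun_prop) fun r hr => by
      rw [abs_of_nonneg (by positivity), one_mul]
      exact pow_le_pow_of_le_one hr.1.le hr.2 (by norm_num)
  rw [radialSymbol, radialMoment, radialMoment, ← intervalIntegral.integral_const_mul,
    ← intervalIntegral.integral_const_mul,
    ← intervalIntegral.integral_sub (h4.const_mul _) (h6.const_mul _)]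
  refine intervalIntegral.integral_mono_on zero_le_one ((h4.const_mul _).sub (h6.const_mul _))
    (intervalIntegrable_radialSymbol_integrand hω h4 t) fun r hr => ?_
  have hcos := cos_le_one_sub_sq_div_two_add_pow_four_div (x := r * t)
  have hr2ω : 0 ≤ r ^ 2 * ω r := by
    rcases hr.1.eq_or_lt with rfl | hr0
    · simp
    · exact mul_nonneg (sq_nonneg r) (hω r ⟨hr0, hr.2⟩)
  calc t ^ 2 / 2 * (r ^ 4 * ω r) - t ^ 4 / 24 * (r ^ 6 * ω r)
      = r ^ 2 * ω r * ((r * t) ^ 2 / 2 - (r * t) ^ 4 / 24) := by ring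
    _ ≤ r ^ 2 * ω r * (1 - cos (r * t)) := mul_le_mul_of_nonneg_left (by linarith) hr2ω

lemma continuous_radialSymbol : Continuous (radialSymbol ω) := by
  refine continuous_iff_continuousAt.2 fun t₀ => ?_
  have hnear : ∀ᶠ t in 𝓝 t₀, |t| ≤ |t₀| + 1 :=
    (continuous_abs.continuousAt.eventually (gt_mem_nhds (lt_add_one |t₀|))).mono fun _ h => h.le
  refine intervalIntegral.continuousAt_of_dominated_interval
    (bound := fun r => (|t₀| + 1) ^ 2 / 2 * (r ^ 4 * ω r))
    (Eventually.of_forall fun t => (intervalIntegrable_radialSymbol_integrand hω h4 t).def'.1)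
    ?_ (h4.const_mul _) (Eventually.of_forall fun r _ => by fun_prop)
  filter_upwards [hnear] with t ht
  refine Eventually.of_forall fun r hr => ?_
  rw [uIoc_of_le zero_le_one] at hr
  have hωr := hω r hr
  have ht2 : t ^ 2 ≤ (|t₀| + 1) ^ 2 := by
    rw [← sq_abs]; exact pow_le_pow_left₀ (abs_nonneg t) ht 2
  calc ‖r ^ 2 * ω r * (1 - cos (r * t))‖ = |r ^ 2 * (1 - cos (r * t))| * ω r := by
        rw [Real.norm_eq_abs, mul_right_comm, abs_mul, abs_of_nonneg hωr]
    _ ≤ t ^ 2 / 2 * r ^ 4 * ω r := mul_le_mul_of_nonneg_right (abs_sq_mul_one_sub_cos_le r t) hωr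
    _ ≤ (|t₀| + 1) ^ 2 / 2 * (r ^ 4 * ω r) := by
      rw [← mul_assoc]; gcongr

lemma moments_le_integral_sin_mul_radialSymbol (s : ℝ) :
    s ^ 2 / 6 * radialMoment ω 4 - s ^ 4 / 120 * radialMoment ω 6 ≤
      ∫ φ in (0 : ℝ)..(π / 2), sin φ * radialSymbol ω (cos φ * s) := by
  have hcos_moments : ∫ φ in (0 : ℝ)..(π / 2),
      (s ^ 2 / 2 * radialMoment ω 4 * (sin φ * cos φ ^ 2) -
        s ^ 4 / 24 * radialMoment ω 6 * (sin φ * cos φ ^ 4)) =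
      s ^ 2 / 6 * radialMoment ω 4 - s ^ 4 / 120 * radialMoment ω 6 := by
    rw [intervalIntegral.integral_sub (by apply Continuous.intervalIntegrable; fun_prop)
        (by apply Continuous.intervalIntegrable; fun_prop), intervalIntegral.integral_const_mul,
      intervalIntegral.integral_const_mul, integral_sin_mul_cos_pow, integral_sin_mul_cos_pow]
    ring
  rw [← hcos_moments]
  refine intervalIntegral.integral_mono_on (by positivity)
    (by apply Continuous.intervalIntegrable; fun_prop)
    ((continuous_sin.mul ((continuous_radialSymbol hω h4).comp (by fun_prop))).intervalIntegrable
      _ _)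
    fun φ hφ => ?_
  have hsin : 0 ≤ sin φ := sin_nonneg_of_nonneg_of_le_pi hφ.1 (hφ.2.trans (by linarith [pi_pos]))
  calc _ = sin φ * ((cos φ * s) ^ 2 / 2 * radialMoment ω 4 -
        (cos φ * s) ^ 4 / 24 * radialMoment ω 6) := by ring
    _ ≤ _ := mul_le_mul_of_nonneg_left (moments_le_radialSymbol hω h4 _) hsin

end radialSymbol

theorem symbol_lower_bound_low_freq_general (ω : ℝ → ℝ)
    (hω : ∀ r ∈ Set.Ioc (0 : ℝ) 1, 0 ≤ ω r)
    (hnorm : 4 * Real.pi * ∫ r in (0:ℝ)..1, r ^ 4 * ω r = 6)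
    (hmom : 4 * Real.pi * ∫ r in (0:ℝ)..1, r ^ 6 * ω r ≤
      4 * Real.pi * ∫ r in (0:ℝ)..1, r ^ 4 * ω r)
    (δ : ℝ) (ξ : EuclideanSpace ℝ (Fin 3))
    (hξ0 : 0 < δ * ‖ξ‖) (hξ1 : δ * ‖ξ‖ ≤ 1) :
    ‖ξ‖ ^ 2 - (1 / 20) * ‖ξ‖ ^ 2 * (δ * ‖ξ‖) ^ 2 ≤
        (4 * Real.pi / δ ^ 2) *
          ∫ φ in (0:ℝ)..(Real.pi / 2), Real.sin φ *
            ∫ r in (0:ℝ)..1, r ^ 2 * ω r * (1 - Real.cos (r * Real.cos φ * (δ * ‖ξ‖))) ∧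
      (1 / 2) * ‖ξ‖ ^ 2 ≤
        (4 * Real.pi / δ ^ 2) *
          ∫ φ in (0:ℝ)..(Real.pi / 2), Real.sin φ *
            ∫ r in (0:ℝ)..1, r ^ 2 * ω r * (1 - Real.cos (r * Real.cos φ * (δ * ‖ξ‖))) := by
  change 4 * π * radialMoment ω 4 = 6 at hnorm
  change 4 * π * radialMoment ω 6 ≤ 4 * π * radialMoment ω 4 at hmom
  rw [hnorm] at hmom
  set s := δ * ‖ξ‖ with hs
  -- `hnorm` forces integrability: the integral of a non-integrable function is `0`.
  have h4 : IntervalIntegrable (fun r => r ^ 4 * ω r) volume 0 1 := by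
    by_contra h
    rw [radialMoment, intervalIntegral.integral_undef h] at hnorm
    norm_num at hnorm
  have hδ : δ ≠ 0 := by rintro rfl; simp [hs] at hξ0
  have hmul_assoc : ∀ r φ : ℝ, r * cos φ * s = r * (cos φ * s) := fun _ _ => mul_assoc _ _ _
  simp only [hmul_assoc]
  have hexpand : 4 * π / δ ^ 2 * (s ^ 2 / 6 * radialMoment ω 4 - s ^ 4 / 120 * radialMoment ω 6) =
      ‖ξ‖ ^ 2 * (4 * π * radialMoment ω 4) / 6 -
        ‖ξ‖ ^ 2 * s ^ 2 * (4 * π * radialMoment ω 6) / 120 := by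
    rw [hs]; field_simp
  have hfirst : ‖ξ‖ ^ 2 - 1 / 20 * ‖ξ‖ ^ 2 * s ^ 2 ≤
      4 * π / δ ^ 2 * ∫ φ in (0 : ℝ)..(π / 2), sin φ * radialSymbol ω (cos φ * s) := calc
    _ ≤ 4 * π / δ ^ 2 * (s ^ 2 / 6 * radialMoment ω 4 - s ^ 4 / 120 * radialMoment ω 6) := by
      rw [hexpand, hnorm]
      linarith [mul_le_mul_of_nonneg_left hmom (by positivity : 0 ≤ ‖ξ‖ ^ 2 * s ^ 2)]
    _ ≤ _ := mul_le_mul_of_nonneg_left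
      (moments_le_integral_sin_mul_radialSymbol hω h4 s) (by positivity)
  have hs2 : s ^ 2 ≤ 1 := by nlinarith
  exact ⟨hfirst, le_trans (by nlinarith [mul_le_mul_of_nonneg_left hs2 (sq_nonneg ‖ξ‖)]) hfirst⟩

theorem symbol_lower_bound_low_freq (ω : ℝ → ℝ)
    (hω : ∀ r ∈ Set.Ioc (0 : ℝ) 1, 0 ≤ ω r)
    (hnorm : 4 * Real.pi * ∫ r in (0:ℝ)..1, r ^ 4 * ω r = 6)
    (hmom : 4 * Real.pi * ∫ r in (0:ℝ)..1, r ^ 6 * ω r ≤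
      4 * Real.pi * ∫ r in (0:ℝ)..1, r ^ 4 * ω r)
    (δ : ℝ) (hδ : 0 < δ) (ξ : EuclideanSpace ℝ (Fin 3))
    (hξ0 : 0 < δ * ‖ξ‖) (hξ1 : δ * ‖ξ‖ ≤ 1) :
    ‖ξ‖ ^ 2 - (1 / 20) * ‖ξ‖ ^ 2 * (δ * ‖ξ‖) ^ 2 ≤
        (4 * Real.pi / δ ^ 2) *
          ∫ φ in (0:ℝ)..(Real.pi / 2), Real.sin φ *
            ∫ r in (0:ℝ)..1, r ^ 2 * ω r * (1 - Real.cos (r * Real.cos φ * (δ * ‖ξ‖))) ∧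
      (1 / 2) * ‖ξ‖ ^ 2 ≤
        (4 * Real.pi / δ ^ 2) *
          ∫ φ in (0:ℝ)..(Real.pi / 2), Real.sin φ *
            ∫ r in (0:ℝ)..1, r ^ 2 * ω r * (1 - Real.cos (r * Real.cos φ * (δ * ‖ξ‖))) :=
  symbol_lower_bound_low_freq_general ω hω hnorm hmom δ ξ hξ0 hξ1
end

section
/- Let ω : (0,1] → ℝ be nonnegative with 4π ∫₀¹ r⁴ ω(r) dr = 6. Define λ_δ(ξ) = (4π/δ²) ∫₀^{π/2} sin φ ∫₀¹ r² ω(r)(1 − cos(r cos(φ) δ|ξ|)) dr dφ for ξ ∈ ℝ³. Then for all ξ with δ|ξ| > 1, λ_δ(ξ) ≥ 1/(16 δ²). -/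
/-!
Write `A = δ|ξ|` and `t = cos φ`. The integrand is nonnegative, so dropping `φ ∈ [0, π/3]` and
substituting turns the `φ`-integral into `∫₀^{1/2} dt`, which Fubini moves inside the `r`-integral.
For `0 < r ≤ 1 ≤ A` the averaged profile `∫₀^{1/2} (1 - cos (r t A)) dt` is at least `r² / 96`:
when `rA ≤ 4` by the Taylor bound `cos x ≤ 1 - x²/2 + x⁴/24`, and when `rA > 4` because its
exact value `1/2 - sin (rA/2) / (rA)` is at least `1/4`. Hence the symbol is at least
`(4π/δ²) · (1/96) ∫₀¹ r⁴ ω = 1 / (16 δ²)`.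
-/

open MeasureTheory Set Real Function

theorem Real.cos_le_one_sub_sq_div_two_add_pow_four_div_24 (x : ℝ) :
    cos x ≤ 1 - x ^ 2 / 2 + x ^ 4 / 24 := by
  wlog hx : 0 ≤ x generalizing x
  · simpa [Even.neg_pow (by decide : Even 2), Even.neg_pow (by decide : Even 4)]
      using this (-x) (by linarith)
  have hcos : cos x = 1 - 2 * sin (x / 2) ^ 2 := by
    rw [show x = 2 * (x / 2) by ring, cos_two_mul, cos_sq']; ring_nf
  rcases le_or_gt ((x / 2) ^ 2) 3 with hsmall | hlarge
  · have hpos : 0 ≤ x / 2 - (x / 2) ^ 3 / 6 := by nlinarith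
    have hsin := pow_le_pow_left₀ hpos (sin_ge_sub_cube (by positivity : 0 ≤ x / 2)) 2
    nlinarith [pow_nonneg hx 6]
  · nlinarith [cos_le_one x]

theorem integral_one_sub_cos_mul {c : ℝ} (hc : c ≠ 0) :
    ∫ t in (0:ℝ)..(1 / 2), (1 - cos (c * t)) = 1 / 2 - sin (c / 2) / c := by
  rw [intervalIntegral.integral_sub intervalIntegrable_const
    ((by fun_prop : Continuous _).intervalIntegrable _ _),
    intervalIntegral.integral_comp_mul_left cos hc, integral_cos]
  simp only [one_div, intervalIntegral.integral_const, sub_zero, smul_eq_mul, mul_one, mul_zero,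
    sin_zero, sub_right_inj]
  field_simp

theorem sq_div_96_le_integral_one_sub_cos_mul {c : ℝ} (hc : c ^ 2 ≤ 40) :
    c ^ 2 / 96 ≤ ∫ t in (0:ℝ)..(1 / 2), (1 - cos (c * t)) := by
  have htaylor : ∫ t in (0:ℝ)..(1 / 2), (c ^ 2 / 2 * t ^ 2 - c ^ 4 / 24 * t ^ 4)
      = c ^ 2 / 48 - c ^ 4 / 3840 := by
    rw [intervalIntegral.integral_sub ((by fun_prop : Continuous _).intervalIntegrable _ _)
      ((by fun_prop : Continuous _).intervalIntegrable _ _)]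
    simp only [intervalIntegral.integral_const_mul, integral_pow]
    ring
  calc c ^ 2 / 96 ≤ c ^ 2 / 48 - c ^ 4 / 3840 := by nlinarith [sq_nonneg c]
    _ = _ := htaylor.symm
    _ ≤ _ := intervalIntegral.integral_mono_on (by norm_num)
        ((by fun_prop : Continuous _).intervalIntegrable _ _)
        ((by fun_prop : Continuous _).intervalIntegrable _ _)
        fun t _ => by linarith [cos_le_one_sub_sq_div_two_add_pow_four_div_24 (c * t)]

theorem quarter_le_integral_one_sub_cos_mul {c : ℝ} (hc : 4 ≤ c) :
    1 / 4 ≤ ∫ t in (0:ℝ)..(1 / 2), (1 - cos (c * t)) := by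
  have hc0 : 0 < c := by linarith
  rw [integral_one_sub_cos_mul hc0.ne']
  have : sin (c / 2) / c ≤ 1 / 4 :=
    (div_le_div_of_nonneg_right (sin_le_one _) hc0.le).trans
      (one_div_le_one_div_of_le (by norm_num) hc)
  linarith

theorem sq_div_96_le_integral_one_sub_cos_mul_mul {r A : ℝ} (hr0 : 0 ≤ r) (hr1 : r ≤ 1)
    (hA : 1 ≤ A) :
    r ^ 2 / 96 ≤ ∫ t in (0:ℝ)..(1 / 2), (1 - cos (r * t * A)) := by
  simp_rw [mul_right_comm r _ A]
  have hrA : r ≤ r * A := le_mul_of_one_le_right hr0 hA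
  rcases le_or_gt (r * A) 4 with hsmall | hlarge
  · have hsq : r ^ 2 ≤ (r * A) ^ 2 := pow_le_pow_left₀ hr0 hrA 2
    have := sq_div_96_le_integral_one_sub_cos_mul (c := r * A) (by nlinarith)
    linarith
  · have := quarter_le_integral_one_sub_cos_mul hlarge.le
    nlinarith

theorem aestronglyMeasurable_of_integrableOn_sq_mul {w : ℝ → ℝ} {s : Set ℝ}
    (hs : MeasurableSet s) (h0 : (0:ℝ) ∉ s) (hint : IntegrableOn (fun r => r ^ 2 * w r) s) :
    AEStronglyMeasurable w (volume.restrict s) := by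
  refine ((measurable_id.pow_const 2).inv.aestronglyMeasurable.mul
    hint.aestronglyMeasurable).congr ?_
  refine ae_restrict_of_forall_mem hs fun r hr => ?_
  have : r ≠ 0 := fun h => h0 (h ▸ hr)
  simp [this]

theorem norm_mul_one_sub_cos_le {a : ℝ} (ha : 0 ≤ a) (r t A : ℝ) :
    ‖a * (1 - cos (r * t * A))‖ ≤ (t * A) ^ 2 / 2 * (r ^ 2 * a) := by
  have hcos := one_sub_sq_div_two_le_cos (x := r * t * A)
  rw [Real.norm_of_nonneg (mul_nonneg ha (by linarith [cos_le_one (r * t * A)]))]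
  calc a * (1 - cos (r * t * A)) ≤ a * ((r * t * A) ^ 2 / 2) := by gcongr; linarith
    _ = (t * A) ^ 2 / 2 * (r ^ 2 * a) := by ring

noncomputable def oneSubCosIntegral (w : ℝ → ℝ) (A t : ℝ) : ℝ :=
  ∫ r in (0:ℝ)..1, w r * (1 - cos (r * t * A))

section

variable {w : ℝ → ℝ} (A : ℝ) (hw : ∀ r ∈ Ioc (0:ℝ) 1, 0 ≤ w r)
include hw

theorem oneSubCosIntegral_nonneg (t : ℝ) : 0 ≤ oneSubCosIntegral w A t := by
  rw [oneSubCosIntegral, intervalIntegral.integral_of_le zero_le_one]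
  exact setIntegral_nonneg measurableSet_Ioc fun r hr =>
    mul_nonneg (hw r hr) (sub_nonneg.2 (cos_le_one _))

variable (hint : IntegrableOn (fun r => r ^ 2 * w r) (Ioc 0 1))
include hint

theorem continuous_oneSubCosIntegral : Continuous (oneSubCosIntegral w A) := by
  have hmeas := aestronglyMeasurable_of_integrableOn_sq_mul measurableSet_Ioc
    (fun h => lt_irrefl 0 h.1) hint
  refine continuous_iff_continuousAt.2 fun t₀ => ?_
  refine intervalIntegral.continuousAt_of_dominated_interval
    (bound := fun r => ((|t₀| + 1) * A) ^ 2 / 2 * (r ^ 2 * w r)) ?_ ?_ ?_ ?_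
  · rw [uIoc_of_le zero_le_one]
    exact Filter.Eventually.of_forall fun t =>
      hmeas.mul (by fun_prop : Continuous _).aestronglyMeasurable
  · filter_upwards [Metric.ball_mem_nhds t₀ one_pos] with t ht
    refine ae_of_all _ fun r hr => ?_
    rw [uIoc_of_le zero_le_one] at hr
    have htt₀ : |t| ≤ |t₀| + 1 := by
      have := abs_sub_abs_le_abs_sub t t₀
      rw [Metric.mem_ball, Real.dist_eq] at ht
      linarith
    have hsq : (t * A) ^ 2 ≤ ((|t₀| + 1) * A) ^ 2 := by
      rw [mul_pow, mul_pow, ← sq_abs t]; gcongr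
    refine (norm_mul_one_sub_cos_le (hw r hr) r t A).trans ?_
    gcongr
    exact mul_nonneg (sq_nonneg r) (hw r hr)
  · exact (intervalIntegrable_iff_integrableOn_Ioc_of_le zero_le_one).2 (hint.const_mul _)
  · exact ae_of_all _ fun r _ => by fun_prop

theorem integrable_prod_mul_one_sub_cos :
    Integrable (uncurry fun t r => w r * (1 - cos (r * t * A)))
      ((volume.restrict (Ioc 0 (1 / 2))).prod (volume.restrict (Ioc 0 1))) := by
  have hmeas := aestronglyMeasurable_of_integrableOn_sq_mul measurableSet_Ioc
    (fun h => lt_irrefl 0 h.1) hint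
  have hbound : Integrable (fun p : ℝ × ℝ => (p.1 * A) ^ 2 / 2 * (p.2 ^ 2 * w p.2))
      ((volume.restrict (Ioc 0 (1 / 2))).prod (volume.restrict (Ioc 0 1))) :=
    Integrable.mul_prod (f := fun t => (t * A) ^ 2 / 2)
      ((by fun_prop : Continuous fun t : ℝ => (t * A) ^ 2 / 2).intervalIntegrable 0 (1 / 2)).1
      hint
  refine hbound.mono' (hmeas.comp_snd.mul (by fun_prop : Continuous _).aestronglyMeasurable) ?_
  filter_upwards [Measure.quasiMeasurePreserving_snd.ae (ae_restrict_mem measurableSet_Ioc)]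
    with p hp
  exact norm_mul_one_sub_cos_le (hw p.2 hp) p.2 p.1 A

theorem moment_div_96_le_integral_oneSubCosIntegral (hA : 1 ≤ A) :
    (∫ r in (0:ℝ)..1, r ^ 2 * w r) / 96 ≤ ∫ t in (0:ℝ)..(1 / 2), oneSubCosIntegral w A t := by
  have hF := integrable_prod_mul_one_sub_cos A hw hint
  simp only [oneSubCosIntegral, intervalIntegral.integral_of_le zero_le_one,
    intervalIntegral.integral_of_le (by norm_num : (0:ℝ) ≤ 1 / 2)]
  rw [integral_integral_swap hF, ← integral_div]
  refine integral_mono_of_nonneg ?_ hF.integral_prod_right ?_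
  · exact ae_restrict_of_forall_mem measurableSet_Ioc fun r hr =>
      div_nonneg (mul_nonneg (sq_nonneg r) (hw r hr)) (by norm_num)
  · refine ae_restrict_of_forall_mem measurableSet_Ioc fun r hr => ?_
    have := sq_div_96_le_integral_one_sub_cos_mul_mul hr.1.le hr.2 hA
    rw [intervalIntegral.integral_of_le (by norm_num : (0:ℝ) ≤ 1 / 2)] at this
    change r ^ 2 * w r / 96 ≤ ∫ t in Ioc 0 (1 / 2), w r * (1 - cos (r * t * A))
    rw [integral_const_mul]
    nlinarith [hw r hr]

end

theorem integral_sin_mul_comp_cos {g : ℝ → ℝ} (hg : Continuous g) (a b : ℝ) :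
    ∫ x in a..b, sin x * g (cos x) = ∫ t in cos b..cos a, g t := by
  rw [intervalIntegral.integral_symm, ← intervalIntegral.integral_comp_mul_deriv
    (f' := fun x => -sin x) (fun x _ => hasDerivAt_cos x) (by fun_prop) hg,
    ← intervalIntegral.integral_neg]
  simp only [Function.comp_apply, mul_neg, mul_comm]

theorem moment_div_96_le_integral_sin_mul_oneSubCosIntegral {w : ℝ → ℝ} {A : ℝ}
    (hw : ∀ r ∈ Ioc (0:ℝ) 1, 0 ≤ w r) (hint : IntegrableOn (fun r => r ^ 2 * w r) (Ioc 0 1))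
    (hA : 1 ≤ A) :
    (∫ r in (0:ℝ)..1, r ^ 2 * w r) / 96 ≤
      ∫ φ in (0:ℝ)..(π / 2), sin φ * oneSubCosIntegral w A (cos φ) := by
  have hK := continuous_oneSubCosIntegral A hw hint
  calc _ ≤ ∫ t in (0:ℝ)..(1 / 2), oneSubCosIntegral w A t :=
        moment_div_96_le_integral_oneSubCosIntegral A hw hint hA
    _ = ∫ φ in (π / 3)..(π / 2), sin φ * oneSubCosIntegral w A (cos φ) := by
        rw [integral_sin_mul_comp_cos hK, cos_pi_div_two, cos_pi_div_three]
    _ ≤ _ := by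
        refine intervalIntegral.integral_mono_interval (by positivity) (by linarith [pi_pos])
          le_rfl
          (ae_restrict_of_forall_mem measurableSet_Ioc fun φ hφ => ?_)
          ((continuous_sin.mul (hK.comp continuous_cos)).intervalIntegrable _ _)
        exact mul_nonneg (sin_nonneg_of_nonneg_of_le_pi hφ.1.le (by linarith [hφ.2, pi_pos]))
          (oneSubCosIntegral_nonneg A hw _)

theorem symbol_lower_bound_high_freq_general (ω : ℝ → ℝ)
    (hω : ∀ r ∈ Set.Ioc (0 : ℝ) 1, 0 ≤ ω r)
    (hnorm : 4 * Real.pi * ∫ r in (0:ℝ)..1, r ^ 4 * ω r = 6)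
    (δ : ℝ) (ξ : EuclideanSpace ℝ (Fin 3)) (hξ : 1 < δ * ‖ξ‖) :
    (4 * Real.pi / δ ^ 2) *
        ∫ φ in (0:ℝ)..(Real.pi / 2), Real.sin φ *
          ∫ r in (0:ℝ)..1, r ^ 2 * ω r * (1 - Real.cos (r * Real.cos φ * (δ * ‖ξ‖)))
      ≥ 1 / (16 * δ ^ 2) := by
  have hint : IntegrableOn (fun r => r ^ 4 * ω r) (Ioc 0 1) := by
    -- otherwise the interval integral in `hnorm` would be the junk value 0
    by_contra h
    rw [intervalIntegral.integral_undef fun h' => h h'.1] at hnorm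
    norm_num at hnorm
  have hmoment : ∫ r in (0:ℝ)..1, r ^ 2 * (r ^ 2 * ω r) = ∫ r in (0:ℝ)..1, r ^ 4 * ω r :=
    intervalIntegral.integral_congr fun r _ => by ring
  have key := moment_div_96_le_integral_sin_mul_oneSubCosIntegral (w := fun r => r ^ 2 * ω r)
    (fun r hr => mul_nonneg (sq_nonneg r) (hω r hr))
    (hint.congr_fun (fun r _ => by ring) measurableSet_Ioc) hξ.le
  rw [hmoment] at key
  calc 1 / (16 * δ ^ 2) = 4 * π / δ ^ 2 * ((∫ r in (0:ℝ)..1, r ^ 4 * ω r) / 96) := by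
        rw [div_mul_div_comm, hnorm]; ring
    _ ≤ _ := by gcongr; exact key

theorem symbol_lower_bound_high_freq (ω : ℝ → ℝ)
    (hω : ∀ r ∈ Set.Ioc (0 : ℝ) 1, 0 ≤ ω r)
    (hnorm : 4 * Real.pi * ∫ r in (0:ℝ)..1, r ^ 4 * ω r = 6)
    (δ : ℝ) (hδ : 0 < δ) (ξ : EuclideanSpace ℝ (Fin 3)) (hξ : 1 < δ * ‖ξ‖) :
    (4 * Real.pi / δ ^ 2) *
        ∫ φ in (0:ℝ)..(Real.pi / 2), Real.sin φ *
          ∫ r in (0:ℝ)..1, r ^ 2 * ω r * (1 - Real.cos (r * Real.cos φ * (δ * ‖ξ‖)))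
      ≥ 1 / (16 * δ ^ 2) :=
  symbol_lower_bound_high_freq_general ω hω hnorm δ ξ hξ
end

section
/- Let ŵ : (0,1] → ℝ be nonnegative with 4π ∫₀¹ r³ ŵ(r) dr = 3 and 4π ∫₀¹ r⁵ ŵ(r) dr ≤ 4π ∫₀¹ r³ ŵ(r) dr. Define b_δ(ξ) = (4π/δ) ∫₀^{π/2} cos φ sin φ ∫₀¹ r² ŵ(r) sin(r cos(φ) δ|ξ|) dr dφ for ξ ∈ ℝ³. Then for all ξ with 0 < δ|ξ| ≤ 1, |ξ| ≥ b_δ(ξ) ≥ |ξ| − (δ|ξ|)²|ξ|/10 > (1/2)|ξ|. -/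
/-!
With `t = δ|ξ| cos φ ≥ 0`, the inner integral `∫₀¹ r² ŵ(r) sin(r t) dr` lies between
`t M₃ - t³ M₅ / 6` and `t M₃`, where `Mₖ = ∫₀¹ rᵏ ŵ(r) dr`, because `x - x³/6 ≤ sin x ≤ x` for
`x ≥ 0` and `ŵ ≥ 0`. Integrating against `cos φ sin φ` over `[0, π/2]` produces the factors
`∫ cos² φ sin φ = 1/3` and `∫ cos⁴ φ sin φ = 1/5`; the normalisation `4π M₃ = 3` turns the upper
bound into `|ξ|`, and `4π M₅ ≤ 3` bounds the correction by `(δ|ξ|)² |ξ| / 10`.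
-/

open Real Set MeasureTheory

lemma integral_cos_pow_mul_sin (n : ℕ) :
    ∫ φ in (0:ℝ)..π / 2, cos φ ^ n * sin φ = 1 / (n + 1) := by
  simpa [mul_comm] using integral_sin_pow_odd_mul_cos_pow (a := 0) (b := π / 2) 0 n

lemma cos_mul_sin_nonneg_of_mem_Icc {φ : ℝ} (hφ : φ ∈ Icc 0 (π / 2)) : 0 ≤ cos φ * sin φ :=
  mul_nonneg (cos_nonneg_of_mem_Icc ⟨by linarith [pi_pos, hφ.1], hφ.2⟩)
    (sin_nonneg_of_nonneg_of_le_pi hφ.1 (by linarith [pi_pos, hφ.2]))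

noncomputable def radialSin (w : ℝ → ℝ) (t : ℝ) : ℝ :=
  ∫ r in (0:ℝ)..1, r ^ 2 * w r * sin (r * t)

section

variable {w : ℝ → ℝ}

lemma aestronglyMeasurable_of_pow_mul {s : Set ℝ} (hs : MeasurableSet s) (h0 : (0 : ℝ) ∉ s)
    {n : ℕ} (h : AEStronglyMeasurable (fun r => r ^ n * w r) (volume.restrict s)) :
    AEStronglyMeasurable w (volume.restrict s) := by
  refine (((measurable_id.pow_const n).inv.aestronglyMeasurable).mul h).congr ?_
  filter_upwards [ae_restrict_mem hs] with r hr
  have : r ≠ 0 := fun h => h0 (h ▸ hr)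
  simp [this]

lemma intervalIntegrable_pow_mul_of_le {m n : ℕ} (hmn : m ≤ n)
    (hw : ∀ r ∈ Ioc (0 : ℝ) 1, 0 ≤ w r)
    (hm : IntervalIntegrable (fun r => r ^ m * w r) volume 0 1) :
    IntervalIntegrable (fun r => r ^ n * w r) volume 0 1 := by
  rw [intervalIntegrable_iff_integrableOn_Ioc_of_le zero_le_one] at hm ⊢
  have hmeas := aestronglyMeasurable_of_pow_mul measurableSet_Ioc (by simp) hm.1
  refine hm.mono' ((continuous_pow n).aestronglyMeasurable.mul hmeas) ?_
  filter_upwards [ae_restrict_mem measurableSet_Ioc] with r hr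
  rw [norm_of_nonneg (mul_nonneg (pow_nonneg hr.1.le n) (hw r hr))]
  exact mul_le_mul_of_nonneg_right (pow_le_pow_of_le_one hr.1.le hr.2 hmn) (hw r hr)

lemma abs_sq_mul_mul_sin_le {r c t : ℝ} (hr : 0 ≤ r) (hc : 0 ≤ c) :
    |r ^ 2 * c * sin (r * t)| ≤ r ^ 3 * c * |t| :=
  calc |r ^ 2 * c * sin (r * t)| = r ^ 2 * c * |sin (r * t)| := by
        rw [abs_mul, abs_of_nonneg (by positivity)]
    _ ≤ r ^ 2 * c * |r * t| := mul_le_mul_of_nonneg_left abs_sin_le_abs (by positivity)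
    _ = r ^ 3 * c * |t| := by rw [abs_mul, abs_of_nonneg hr]; ring

lemma intervalIntegrable_sq_mul_mul_sin (hw : ∀ r ∈ Ioc (0 : ℝ) 1, 0 ≤ w r)
    (h3 : IntervalIntegrable (fun r => r ^ 3 * w r) volume 0 1) (t : ℝ) :
    IntervalIntegrable (fun r => r ^ 2 * w r * sin (r * t)) volume 0 1 := by
  rw [intervalIntegrable_iff_integrableOn_Ioc_of_le zero_le_one] at h3 ⊢
  have hmeas := aestronglyMeasurable_of_pow_mul measurableSet_Ioc (by simp) h3.1
  refine (h3.mul_const |t|).mono' ?_ ?_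
  · exact ((continuous_pow 2).aestronglyMeasurable.mul hmeas).mul
      (by fun_prop : Continuous fun r => sin (r * t)).aestronglyMeasurable
  · filter_upwards [ae_restrict_mem measurableSet_Ioc] with r hr
    exact abs_sq_mul_mul_sin_le hr.1.le (hw r hr)

lemma continuous_radialSin (hw : ∀ r ∈ Ioc (0 : ℝ) 1, 0 ≤ w r)
    (h3 : IntervalIntegrable (fun r => r ^ 3 * w r) volume 0 1) : Continuous (radialSin w) := by
  refine continuous_iff_continuousAt.2 fun t₀ =>
    intervalIntegral.continuousAt_of_dominated_interval
    (bound := fun r => r ^ 3 * w r * (|t₀| + 1)) ?_ ?_ (h3.mul_const _) ?_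
  · exact .of_forall fun t =>
      (intervalIntegrable_sq_mul_mul_sin hw h3 t).def'.aestronglyMeasurable
  · filter_upwards [Metric.ball_mem_nhds t₀ one_pos] with t ht
    refine .of_forall fun r hr => ?_
    rw [uIoc_of_le zero_le_one] at hr
    refine (abs_sq_mul_mul_sin_le hr.1.le (hw r hr)).trans ?_
    have : |t| ≤ |t₀| + 1 := by
      have := abs_sub_abs_le_abs_sub t t₀
      rw [Metric.mem_ball, dist_eq] at ht
      linarith
    have := hw r hr
    have := hr.1.le
    gcongr
  · exact .of_forall fun r _ => by fun_prop

lemma radialSin_le (hw : ∀ r ∈ Ioc (0 : ℝ) 1, 0 ≤ w r)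
    (h3 : IntervalIntegrable (fun r => r ^ 3 * w r) volume 0 1) {t : ℝ} (ht : 0 ≤ t) :
    radialSin w t ≤ (∫ r in (0:ℝ)..1, r ^ 3 * w r) * t := by
  rw [← intervalIntegral.integral_mul_const]
  refine intervalIntegral.integral_mono_on_of_le_Ioo zero_le_one
    (intervalIntegrable_sq_mul_mul_sin hw h3 t) (h3.mul_const t) fun r hr => ?_
  have := hw r (Ioo_subset_Ioc_self hr)
  calc r ^ 2 * w r * sin (r * t) ≤ r ^ 2 * w r * (r * t) := by
        have := hr.1.le
        gcongr
        exact sin_le (by positivity)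
    _ = r ^ 3 * w r * t := by ring

lemma sub_le_radialSin (hw : ∀ r ∈ Ioc (0 : ℝ) 1, 0 ≤ w r)
    (h3 : IntervalIntegrable (fun r => r ^ 3 * w r) volume 0 1) {t : ℝ} (ht : 0 ≤ t) :
    (∫ r in (0:ℝ)..1, r ^ 3 * w r) * t - (∫ r in (0:ℝ)..1, r ^ 5 * w r) * (t ^ 3 / 6) ≤
      radialSin w t := by
  have h5 := intervalIntegrable_pow_mul_of_le (by norm_num : 3 ≤ 5) hw h3
  rw [← intervalIntegral.integral_mul_const, ← intervalIntegral.integral_mul_const,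
    ← intervalIntegral.integral_sub (h3.mul_const _) (h5.mul_const _)]
  refine intervalIntegral.integral_mono_on_of_le_Ioo zero_le_one
    ((h3.mul_const _).sub (h5.mul_const _)) (intervalIntegrable_sq_mul_mul_sin hw h3 t)
    fun r hr => ?_
  have := hw r (Ioo_subset_Ioc_self hr)
  calc r ^ 3 * w r * t - r ^ 5 * w r * (t ^ 3 / 6)
        = r ^ 2 * w r * (r * t - (r * t) ^ 3 / 6) := by ring
    _ ≤ r ^ 2 * w r * sin (r * t) := by
        have := hr.1.le
        gcongr
        exact sin_ge_sub_cube (by positivity)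

lemma integral_cos_mul_sin_mul_radialSin_le (hw : ∀ r ∈ Ioc (0 : ℝ) 1, 0 ≤ w r)
    (h3 : IntervalIntegrable (fun r => r ^ 3 * w r) volume 0 1) {a : ℝ} (ha : 0 ≤ a) :
    ∫ φ in (0:ℝ)..π / 2, cos φ * sin φ * radialSin w (cos φ * a) ≤
      (∫ r in (0:ℝ)..1, r ^ 3 * w r) * a / 3 := by
  have hF := continuous_radialSin hw h3
  calc _ ≤ ∫ φ in (0:ℝ)..π / 2,
          cos φ ^ 2 * sin φ * ((∫ r in (0:ℝ)..1, r ^ 3 * w r) * a) := by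
        refine intervalIntegral.integral_mono_on (by positivity)
          (Continuous.intervalIntegrable (by fun_prop) _ _)
          (Continuous.intervalIntegrable (by fun_prop) _ _) fun φ hφ => ?_
        have hcos : 0 ≤ cos φ := cos_nonneg_of_mem_Icc ⟨by linarith [pi_pos, hφ.1], hφ.2⟩
        calc cos φ * sin φ * radialSin w (cos φ * a)
            ≤ cos φ * sin φ * ((∫ r in (0:ℝ)..1, r ^ 3 * w r) * (cos φ * a)) :=
              mul_le_mul_of_nonneg_left (radialSin_le hw h3 (by positivity))
                (cos_mul_sin_nonneg_of_mem_Icc hφ)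
          _ = _ := by ring
    _ = _ := by rw [intervalIntegral.integral_mul_const, integral_cos_pow_mul_sin]; ring

lemma sub_le_integral_cos_mul_sin_mul_radialSin (hw : ∀ r ∈ Ioc (0 : ℝ) 1, 0 ≤ w r)
    (h3 : IntervalIntegrable (fun r => r ^ 3 * w r) volume 0 1) {a : ℝ} (ha : 0 ≤ a) :
    (∫ r in (0:ℝ)..1, r ^ 3 * w r) * a / 3 - (∫ r in (0:ℝ)..1, r ^ 5 * w r) * a ^ 3 / 30 ≤
      ∫ φ in (0:ℝ)..π / 2, cos φ * sin φ * radialSin w (cos φ * a) := by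
  set I₃ := ∫ r in (0:ℝ)..1, r ^ 3 * w r
  set I₅ := ∫ r in (0:ℝ)..1, r ^ 5 * w r
  have hF := continuous_radialSin hw h3
  have hint (n : ℕ) (c : ℝ) :
      IntervalIntegrable (fun φ => cos φ ^ n * sin φ * c) volume 0 (π / 2) :=
    Continuous.intervalIntegrable (by fun_prop) _ _
  calc _ = ∫ φ in (0:ℝ)..π / 2,
          cos φ ^ 2 * sin φ * (I₃ * a) - cos φ ^ 4 * sin φ * (I₅ * a ^ 3 / 6) := by
        rw [intervalIntegral.integral_sub (hint 2 _) (hint 4 _),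
          intervalIntegral.integral_mul_const, intervalIntegral.integral_mul_const,
          integral_cos_pow_mul_sin, integral_cos_pow_mul_sin]
        ring
    _ ≤ _ := by
        refine intervalIntegral.integral_mono_on (by positivity) ((hint 2 _).sub (hint 4 _))
          (Continuous.intervalIntegrable (by fun_prop) _ _) fun φ hφ => ?_
        have hcos : 0 ≤ cos φ := cos_nonneg_of_mem_Icc ⟨by linarith [pi_pos, hφ.1], hφ.2⟩
        calc cos φ ^ 2 * sin φ * (I₃ * a) - cos φ ^ 4 * sin φ * (I₅ * a ^ 3 / 6)
            = cos φ * sin φ * (I₃ * (cos φ * a) - I₅ * ((cos φ * a) ^ 3 / 6)) := by ring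
          _ ≤ _ := mul_le_mul_of_nonneg_left (sub_le_radialSin hw h3 (by positivity))
                (cos_mul_sin_nonneg_of_mem_Icc hφ)

end

theorem gradient_symbol_bounds (w : ℝ → ℝ)
    (hw : ∀ r ∈ Set.Ioc (0 : ℝ) 1, 0 ≤ w r)
    (hnorm : 4 * Real.pi * ∫ r in (0:ℝ)..1, r ^ 3 * w r = 3)
    (hmom : 4 * Real.pi * ∫ r in (0:ℝ)..1, r ^ 5 * w r ≤
      4 * Real.pi * ∫ r in (0:ℝ)..1, r ^ 3 * w r)
    (δ : ℝ) (hδ : 0 < δ) (ξ : EuclideanSpace ℝ (Fin 3))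
    (hξ0 : 0 < δ * ‖ξ‖) (hξ1 : δ * ‖ξ‖ ≤ 1) :
    ‖ξ‖ ≥ (4 * Real.pi / δ) *
        ∫ φ in (0:ℝ)..(Real.pi / 2), Real.cos φ * Real.sin φ *
          ∫ r in (0:ℝ)..1, r ^ 2 * w r * Real.sin (r * Real.cos φ * (δ * ‖ξ‖)) ∧
      (4 * Real.pi / δ) *
          ∫ φ in (0:ℝ)..(Real.pi / 2), Real.cos φ * Real.sin φ *
            ∫ r in (0:ℝ)..1, r ^ 2 * w r * Real.sin (r * Real.cos φ * (δ * ‖ξ‖))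
        ≥ ‖ξ‖ - (δ * ‖ξ‖) ^ 2 * ‖ξ‖ / 10 ∧
      ‖ξ‖ - (δ * ‖ξ‖) ^ 2 * ‖ξ‖ / 10 > (1 / 2) * ‖ξ‖ := by
  have hξ : 0 < ‖ξ‖ := pos_of_mul_pos_right hξ0 hδ.le
  have h3 : IntervalIntegrable (fun r => r ^ 3 * w r) volume 0 1 := by
    by_contra h
    rw [intervalIntegral.integral_undef h] at hnorm
    norm_num at hnorm
  have hsymbol : (∫ φ in (0:ℝ)..π / 2, cos φ * sin φ *
      ∫ r in (0:ℝ)..1, r ^ 2 * w r * sin (r * cos φ * (δ * ‖ξ‖))) =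
      ∫ φ in (0:ℝ)..π / 2, cos φ * sin φ * radialSin w (cos φ * (δ * ‖ξ‖)) := by
    simp only [radialSin, mul_assoc]
  rw [hsymbol]
  have hup := integral_cos_mul_sin_mul_radialSin_le hw h3 hξ0.le
  have hlo := sub_le_integral_cos_mul_sin_mul_radialSin hw h3 hξ0.le
  set I₃ := ∫ r in (0:ℝ)..1, r ^ 3 * w r
  set I₅ := ∫ r in (0:ℝ)..1, r ^ 5 * w r
  set S := ∫ φ in (0:ℝ)..π / 2, cos φ * sin φ * radialSin w (cos φ * (δ * ‖ξ‖))
  refine ⟨?_, ?_, ?_⟩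
  · calc 4 * π / δ * S ≤ 4 * π / δ * (I₃ * (δ * ‖ξ‖) / 3) := by gcongr
      _ = ‖ξ‖ := by field_simp; linear_combination hnorm
  · have hI₅ : 4 * π * I₅ ≤ 3 := hnorm ▸ hmom
    calc ‖ξ‖ - (δ * ‖ξ‖) ^ 2 * ‖ξ‖ / 10
        ≤ ‖ξ‖ - 4 * π * I₅ * ((δ * ‖ξ‖) ^ 2 * ‖ξ‖) / 30 := by
          linarith [mul_le_mul_of_nonneg_right hI₅ (by positivity : 0 ≤ (δ * ‖ξ‖) ^ 2 * ‖ξ‖)]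
      _ = 4 * π / δ * (I₃ * (δ * ‖ξ‖) / 3 - I₅ * (δ * ‖ξ‖) ^ 3 / 30) := by
        field_simp; linear_combination -30 * hnorm
      _ ≤ 4 * π / δ * S := by gcongr
  · nlinarith
end

section
/- Let δ, |ξ| > 0 with δ|ξ| ≤ 1, and let b, λ, c be reals with |ξ| − (δ|ξ|)²|ξ|/10 ≤ b ≤ |ξ| (so b > |ξ|/2), λ ≤ |ξ|², c ≤ M|ξ|², and q = b² + δ²cλ. Then |b/q − 1/|ξ|| ≤ δ²cλ/b³ + |1/b − 1/|ξ|| ≤ (8M + 1)·δ²·|ξ|. -/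
theorem pressure_gradient_symbol_low_freq (δ s M b lam c : ℝ) (hδ : 0 < δ)
    (hs : 0 < s) (hδs : δ * s ≤ 1) (hM : 0 < M)
    (hb1 : s - (δ * s) ^ 2 * s / 10 ≤ b) (hb2 : b ≤ s)
    (hlam0 : 0 < lam) (hlam : lam ≤ s ^ 2) (hc0 : 0 ≤ c) (hc : c ≤ M * s ^ 2) :
    |b / (b ^ 2 + δ ^ 2 * c * lam) - 1 / s| ≤
        δ ^ 2 * c * lam / b ^ 3 + |1 / b - 1 / s| ∧
      δ ^ 2 * c * lam / b ^ 3 + |1 / b - 1 / s| ≤ (8 * M + 1) * δ ^ 2 * s := by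
  have hδs0 : 0 < δ * s := mul_pos hδ hs
  have hδs2 : (δ * s) ^ 2 ≤ 1 := by nlinarith
  have hb9 : 9 * s / 10 ≤ b := by nlinarith
  have hbpos : 0 < b := by nlinarith
  have hnum : 0 ≤ δ ^ 2 * c * lam := by positivity
  have hq : 0 < b ^ 2 + δ ^ 2 * c * lam := by positivity
  have key : b / (b ^ 2 + δ ^ 2 * c * lam) - 1 / b =
      -(δ ^ 2 * c * lam) / ((b ^ 2 + δ ^ 2 * c * lam) * b) := by
    field_simp
    ring
  have h1 : |b / (b ^ 2 + δ ^ 2 * c * lam) - 1 / b| ≤ δ ^ 2 * c * lam / b ^ 3 := by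
    rw [key, abs_div, abs_neg, abs_of_nonneg hnum, abs_of_pos (by positivity)]
    apply div_le_div_of_nonneg_left hnum (by positivity)
    nlinarith [sq_nonneg b]
  constructor
  · calc |b / (b ^ 2 + δ ^ 2 * c * lam) - 1 / s|
        ≤ |b / (b ^ 2 + δ ^ 2 * c * lam) - 1 / b| + |1 / b - 1 / s| := by
          have := abs_sub_abs_le_abs_sub (b / (b ^ 2 + δ ^ 2 * c * lam) - 1 / b) (1/s - 1/b)
          have h := abs_sub (b / (b ^ 2 + δ ^ 2 * c * lam) - 1 / b) (1/s - 1/b)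
          calc |b / (b ^ 2 + δ ^ 2 * c * lam) - 1 / s|
              = |(b / (b ^ 2 + δ ^ 2 * c * lam) - 1 / b) + (1 / b - 1 / s)| := by ring_nf
            _ ≤ _ := abs_add_le _ _
      _ ≤ δ ^ 2 * c * lam / b ^ 3 + |1 / b - 1 / s| := by linarith
  · have hA : δ ^ 2 * c * lam / b ^ 3 ≤ 8 * M * δ ^ 2 * s := by
      rw [div_le_iff₀ (by positivity)]
      have hb3 : (9 * s / 10) ^ 3 ≤ b ^ 3 := pow_le_pow_left₀ (by positivity) hb9 3
      have hcl : c * lam ≤ M * s ^ 2 * s ^ 2 :=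
        mul_le_mul hc hlam (le_of_lt hlam0) (by positivity)
      have h2 : δ ^ 2 * (c * lam) ≤ δ ^ 2 * (M * s ^ 2 * s ^ 2) :=
        mul_le_mul_of_nonneg_left hcl (by positivity)
      have h3 : 8 * M * δ ^ 2 * s * (9 * s / 10) ^ 3 ≤ 8 * M * δ ^ 2 * s * b ^ 3 :=
        mul_le_mul_of_nonneg_left hb3 (by positivity)
      nlinarith [mul_pos (mul_pos hM (mul_pos hδ hδ)) (mul_pos (mul_pos hs hs) (mul_pos hs hs))]
    have hB : |1 / b - 1 / s| ≤ δ ^ 2 * s := by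
      have hle : 1 / s ≤ 1 / b := by
        apply one_div_le_one_div_of_le hbpos hb2
      rw [abs_of_nonneg (by linarith)]
      have heq : 1 / b - 1 / s = (s - b) / (b * s) := by field_simp
      rw [heq, div_le_iff₀ (by positivity)]
      nlinarith [mul_pos hbpos hs, sq_nonneg δ]
    linarith
end
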